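/- For all 0 ≤ m ≤ p and 1 ≤ r < s ≤ p: G^{(m)}_{r,s} = G^{(m)}_{r,-s}, G^{(m)}_{-r,-s} = conj(G^{(m)}_{r,s}), and G^{(m)}_{-r,s} = conj(G^{(m)}_{r,s}). -/

import Mathlib

open scoped Classical
open Finset

noncomputable section

/-- Bit strings in {±1}^{2p+1}, indexed by integers -p ≤ j ≤ p (Bool-encoded). -/
def QStr (p : ℕ) : Type := {j : ℤ // j ∈ Finset.Icc (-(p : ℤ)) (p : ℤ)} → Bool

instance (p : ℕ) : Fintype (QStr p) := by unfold QStr; infer_instance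
instance (p : ℕ) : DecidableEq (QStr p) := by unfold QStr; infer_instance

/-- The ±1 entry of the string `a` at index `j` (1 outside the index range). -/
def ent (p : ℕ) (a : QStr p) (j : ℤ) : ℝ :=
  if h : j ∈ Finset.Icc (-(p : ℤ)) (p : ℤ) then (if a ⟨j, h⟩ then 1 else -1) else 1

/-- Transfer matrix element ⟨x|e^{iβX}|y⟩ = cos β if x = y, i sin β otherwise. -/
def bket (x y : ℝ) (β : ℝ) : ℂ :=
  if x = y then (Real.cos β : ℂ) else Complex.I * (Real.sin β : ℂ)

/-- f(a) = (1/2)⟨a₁|e^{iβ₁X}|a₂⟩⋯⟨a_p|e^{iβ_pX}|a₀⟩⟨a₀|e^{-iβ_pX}|a_{-p}⟩⋯⟨a_{-2}|e^{-iβ₁X}|a_{-1}⟩. -/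
def fQ (p : ℕ) (β : ℕ → ℝ) (a : QStr p) : ℂ :=
  (1 / 2 : ℂ) * ∏ r ∈ Finset.Icc 1 p,
    (bket (ent p a (r : ℤ)) (ent p a (if r = p then 0 else (r : ℤ) + 1)) (β r) *
      bket (ent p a (if r = p then 0 else -((r : ℤ) + 1))) (ent p a (-(r : ℤ))) (-(β r)))

/-- Γ_r = γ_r, Γ₀ = 0, Γ_{-r} = -γ_r. -/
def Gam (γ : ℕ → ℝ) (j : ℤ) : ℝ :=
  if 0 < j then γ j.toNat else if j < 0 then -(γ (-j).toNat) else 0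

/-- Γ·(ab) = Σ_{j=-p}^{p} Γ_j a_j b_j. -/
def Gdot (p : ℕ) (γ : ℕ → ℝ) (a b : QStr p) : ℝ :=
  ∑ j ∈ Finset.Icc (-(p : ℤ)) (p : ℤ), Gam γ j * ent p a j * ent p b j

/-- a ∈ B₀ iff a_{-r} = a_r for all 1 ≤ r ≤ p. -/
def symB (p : ℕ) (a : QStr p) : Prop :=
  ∀ r ∈ Finset.Icc (1 : ℤ) (p : ℤ), ent p a (-r) = ent p a r

/-- T(a): the largest 1 ≤ r ≤ p with a_r ≠ a_{-r}, and 0 for a ∈ B₀. -/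
def Tof (p : ℕ) (a : QStr p) : ℤ :=
  WithBot.unbotD 0 (((Finset.Icc (1 : ℤ) (p : ℤ)).filter (fun r => ent p a r ≠ ent p a (-r))).max)

/-- The string a' : negate entries with 1 ≤ |j| ≤ T(a), keep the rest. -/
def primeQ (p : ℕ) (a : QStr p) : QStr p :=
  fun j => if 1 ≤ |j.1| ∧ |j.1| ≤ Tof p a then !(a j) else a j

/-- Entrywise negation -a. -/
def negQ (p : ℕ) (a : QStr p) : QStr p := fun j => !(a j)

/-- Index reversal ā, with ā_j = a_{-j}. -/
def revQ (p : ℕ) (a : QStr p) : QStr p :=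
  fun j => a ⟨-j.1, by have h := j.2; simp only [Finset.mem_Icc] at h ⊢; omega⟩

/-- The finite-D iteration (cosine form):
H_D^{(0)}(a) = 1, H_D^{(m)}(a) = (Σ_b f(b) H_D^{(m-1)}(b) cos[(1/√D) Γ·(ab)])^D. -/
def HD (p : ℕ) (β γ : ℕ → ℝ) (D : ℕ) : ℕ → QStr p → ℂ
  | 0, _ => 1
  | m + 1, a =>
      (∑ b : QStr p, fQ p β b * HD p β γ D m b *
        (Real.cos ((1 / Real.sqrt D) * Gdot p γ a b) : ℂ)) ^ D

/-- The finite-D iteration (exponential form):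
H_D^{(0)}(a) = 1, H_D^{(m)}(a) = (Σ_b f(b) H_D^{(m-1)}(b) exp[-(i/√D) Γ·(ab)])^D. -/
def HDexp (p : ℕ) (β γ : ℕ → ℝ) (D : ℕ) : ℕ → QStr p → ℂ
  | 0, _ => 1
  | m + 1, a =>
      (∑ b : QStr p, fQ p β b * HDexp p β γ D m b *
        Complex.exp (-(Complex.I / (Real.sqrt D : ℂ)) * (Gdot p γ a b : ℂ))) ^ D

/-- The D → ∞ iteration: H^{(0)}(a) = 1,
H^{(m)}(a) = exp(-(1/2) Σ_b f(b) H^{(m-1)}(b) (Γ·(ab))²). -/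
def Hinf (p : ℕ) (β γ : ℕ → ℝ) : ℕ → QStr p → ℂ
  | 0, _ => 1
  | m + 1, a =>
      Complex.exp (-(1 / 2 : ℂ) *
        ∑ b : QStr p, fQ p β b * Hinf p β γ m b * ((Gdot p γ a b) ^ 2 : ℝ))

/-- G^{(m)}_{j,k} = Σ_a f(a) H^{(m)}(a) a_j a_k, with H^{(m)} the D → ∞ iterates. -/
def GmatH (p : ℕ) (β γ : ℕ → ℝ) (m : ℕ) (j k : ℤ) : ℂ :=
  ∑ a : QStr p, fQ p β a * Hinf p β γ m a * (ent p a j : ℂ) * (ent p a k : ℂ)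

/-- The recursively-defined G matrices: G^{(0)}_{j,k} = Σ_a f(a) a_j a_k and
G^{(m)}_{j,k} = Σ_a f(a) a_j a_k exp(-(1/2) Σ_{j',k'} G^{(m-1)}_{j',k'} Γ_{j'} Γ_{k'} a_{j'} a_{k'}). -/
def GmatR (p : ℕ) (β γ : ℕ → ℝ) : ℕ → ℤ → ℤ → ℂ
  | 0, j, k => ∑ a : QStr p, fQ p β a * (ent p a j : ℂ) * (ent p a k : ℂ)
  | m + 1, j, k =>
      ∑ a : QStr p, fQ p β a * (ent p a j : ℂ) * (ent p a k : ℂ) *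
        Complex.exp (-(1 / 2 : ℂ) *
          ∑ j' ∈ Finset.Icc (-(p : ℤ)) (p : ℤ), ∑ k' ∈ Finset.Icc (-(p : ℤ)) (p : ℤ),
            GmatR p β γ m j' k' * (Gam γ j' : ℂ) * (Gam γ k' : ℂ) *
              (ent p a j' : ℂ) * (ent p a k' : ℂ))

/-- H^{(m+1)}(a) expressed through G^{(m)}:
H^{(m+1)}(a) = exp(-(1/2) Σ_{j',k'} G^{(m)}_{j',k'} Γ_{j'} Γ_{k'} a_{j'} a_{k'}). -/
def HG (p : ℕ) (β γ : ℕ → ℝ) (m : ℕ) (a : QStr p) : ℂ :=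
  Complex.exp (-(1 / 2 : ℂ) *
    ∑ j' ∈ Finset.Icc (-(p : ℤ)) (p : ℤ), ∑ k' ∈ Finset.Icc (-(p : ℤ)) (p : ℤ),
      GmatR p β γ m j' k' * (Gam γ j' : ℂ) * (Gam γ k' : ℂ) *
        (ent p a j' : ℂ) * (ent p a k' : ℂ))

end

noncomputable section Aux

variable {p : ℕ} {β γ : ℕ → ℝ}

lemma bket_symm (x y β : ℝ) : bket x y β = bket y x β := by
  unfold bket; by_cases h : x = y
  · simp [h]
  · rw [if_neg h, if_neg (fun hyx => h hyx.symm)]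

lemma bket_neg (x y β : ℝ) : bket x y (-β) = (starRingEnd ℂ) (bket x y β) := by
  unfold bket; by_cases h : x = y
  · rw [if_pos h, if_pos h, Real.cos_neg, Complex.conj_ofReal]
  · rw [if_neg h, if_neg h, Real.sin_neg, map_mul, Complex.conj_I, Complex.conj_ofReal]
    push_cast; ring

lemma bket_smul (x y β : ℝ) {ε : ℝ} (hε : ε ≠ 0) : bket (ε * x) (ε * y) β = bket x y β := by
  unfold bket
  rw [if_congr (mul_right_inj' hε) rfl rfl]

lemma ent_one_or_neg_one (a : QStr p) (j : ℤ) : ent p a j = 1 ∨ ent p a j = -1 := by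
  unfold ent; split
  · split <;> simp
  · left; rfl

lemma ent_ne_zero (a : QStr p) (j : ℤ) : ent p a j ≠ 0 := by
  rcases ent_one_or_neg_one a j with h | h <;> rw [h] <;> norm_num

lemma ent_notmem (a : QStr p) {j : ℤ} (h : j ∉ Finset.Icc (-(p : ℤ)) (p : ℤ)) :
    ent p a j = 1 := by unfold ent; rw [dif_neg h]

lemma neg_mem_Icc {j : ℤ} : -j ∈ Finset.Icc (-(p : ℤ)) (p : ℤ) ↔ j ∈ Finset.Icc (-(p : ℤ)) (p : ℤ) := by
  simp only [Finset.mem_Icc]; omega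

lemma ent_rev (a : QStr p) (j : ℤ) : ent p (revQ p a) j = ent p a (-j) := by
  unfold ent revQ
  by_cases h : j ∈ Finset.Icc (-(p : ℤ)) (p : ℤ)
  · rw [dif_pos h, dif_pos (neg_mem_Icc.2 h)]
  · rw [dif_neg h, dif_neg (fun hn => h (by simpa using neg_mem_Icc.2 hn))]

lemma revQ_revQ (a : QStr p) : revQ p (revQ p a) = a := by
  funext j; unfold revQ; congr 1; exact Subtype.ext (neg_neg j.1)

lemma fQ_rev (a : QStr p) : fQ p β (revQ p a) = (starRingEnd ℂ) (fQ p β a) := by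
  unfold fQ
  rw [map_mul, map_prod]
  congr 1
  · rw [map_div₀, map_one, map_ofNat]
  refine Finset.prod_congr rfl fun r _ => ?_
  rw [map_mul, ← bket_neg, ← bket_neg, neg_neg]
  simp only [ent_rev]
  by_cases h : r = p
  · simp only [if_pos h, neg_zero, neg_neg]
    rw [bket_symm (ent p a (-(r:ℤ))) (ent p a 0), bket_symm (ent p a 0) (ent p a (r:ℤ))]
    ring
  · simp only [if_neg h, neg_neg]
    rw [bket_symm (ent p a (-(r:ℤ))) (ent p a (-((r:ℤ)+1))),
      bket_symm (ent p a ((r:ℤ)+1)) (ent p a (r:ℤ))]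
    ring

lemma Gam_neg (j : ℤ) : Gam γ (-j) = -Gam γ j := by
  unfold Gam
  rcases lt_trichotomy j 0 with h | h | h
  · rw [if_pos (by omega : (0:ℤ) < -j), if_neg (by omega : ¬ (0:ℤ) < j), if_pos h, neg_neg]
  · simp [h]
  · rw [if_neg (by omega : ¬ (0:ℤ) < -j), if_pos (by omega : -j < 0), if_pos h, neg_neg]

lemma Gam_zero : Gam γ 0 = 0 := by unfold Gam; norm_num

lemma Gdot_rev (a b : QStr p) : Gdot p γ (revQ p a) (revQ p b) = -Gdot p γ a b := by
  unfold Gdot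
  rw [← Finset.sum_neg_distrib]
  refine Finset.sum_nbij' (fun j => -j) (fun j => -j) ?_ ?_ ?_ ?_ ?_
  · intro j hj; exact neg_mem_Icc.2 hj
  · intro j hj; exact neg_mem_Icc.2 hj
  · intro j _; exact neg_neg j
  · intro j _; exact neg_neg j
  · intro j _
    simp only [ent_rev, Gam_neg, neg_neg]
    ring

end Aux
noncomputable section Aux2

variable {p : ℕ} {β γ : ℕ → ℝ}

def revE (p : ℕ) : QStr p ≃ QStr p :=
  ⟨revQ p, revQ p, revQ_revQ, revQ_revQ⟩

lemma Hinf_rev (m : ℕ) (a : QStr p) :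
    Hinf p β γ m (revQ p a) = (starRingEnd ℂ) (Hinf p β γ m a) := by
  induction m generalizing a with
  | zero => simp [Hinf]
  | succ m ih =>
    show Complex.exp _ = (starRingEnd ℂ) (Complex.exp _)
    rw [← Complex.exp_conj]
    congr 1
    rw [map_mul, map_sum]
    congr 1
    · rw [map_neg, map_div₀, map_one, map_ofNat]
    rw [← Equiv.sum_comp (revE p)]
    refine Finset.sum_congr rfl fun b _ => ?_
    simp only [revE, Equiv.coe_fn_mk]
    rw [fQ_rev, ih, Gdot_rev, map_mul, map_mul]
    congr 1
    rw [Complex.conj_ofReal]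
    push_cast
    ring

lemma GmatH_rev (m : ℕ) (j k : ℤ) :
    GmatH p β γ m (-j) (-k) = (starRingEnd ℂ) (GmatH p β γ m j k) := by
  unfold GmatH
  rw [map_sum, ← Equiv.sum_comp (revE p)]
  refine Finset.sum_congr rfl fun a _ => ?_
  simp only [revE, Equiv.coe_fn_mk]
  rw [fQ_rev, Hinf_rev, ent_rev, ent_rev, neg_neg, neg_neg,
    map_mul, map_mul, map_mul, Complex.conj_ofReal, Complex.conj_ofReal]

lemma GmatH_comm (m : ℕ) (j k : ℤ) : GmatH p β γ m j k = GmatH p β γ m k j := by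
  unfold GmatH
  exact Finset.sum_congr rfl fun a _ => by ring

end Aux2
noncomputable section Aux3

variable {p : ℕ} {β γ : ℕ → ℝ}

lemma Tof_spec (a : QStr p) :
    Tof p a = 0 ∨ (Tof p a ∈ Finset.Icc (1:ℤ) (p:ℤ) ∧
      ent p a (Tof p a) ≠ ent p a (-(Tof p a))) := by
  unfold Tof
  cases hmax : (((Finset.Icc (1 : ℤ) (p : ℤ)).filter
      (fun r => ent p a r ≠ ent p a (-r))).max) with
  | bot => left; rfl
  | coe t =>
    right
    have ht := Finset.mem_of_max hmax
    rw [Finset.mem_filter] at ht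
    exact ⟨by simpa using ht.1, by simpa using ht.2⟩

lemma le_Tof (a : QStr p) {j : ℤ} (hj : j ∈ Finset.Icc (1:ℤ) (p:ℤ))
    (hne : ent p a j ≠ ent p a (-j)) : j ≤ Tof p a := by
  have hmem : j ∈ ((Finset.Icc (1 : ℤ) (p : ℤ)).filter
      (fun r => ent p a r ≠ ent p a (-r))) := Finset.mem_filter.2 ⟨hj, hne⟩
  have hle := Finset.le_max hmem
  unfold Tof
  cases hmax : (((Finset.Icc (1 : ℤ) (p : ℤ)).filter
      (fun r => ent p a r ≠ ent p a (-r))).max) with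
  | bot => rw [hmax] at hle; exact absurd hle (by simp)
  | coe t => rw [hmax] at hle; exact_mod_cast hle

lemma Tof_nonneg (a : QStr p) : 0 ≤ Tof p a := by
  rcases Tof_spec a with h | ⟨h, _⟩
  · omega
  · rw [Finset.mem_Icc] at h; omega

lemma Tof_le (a : QStr p) : Tof p a ≤ (p : ℤ) := by
  rcases Tof_spec a with h | ⟨h, _⟩
  · simp [h]
  · rw [Finset.mem_Icc] at h; omega

lemma ent_match (a : QStr p) {k : ℤ} (h1 : Tof p a < |k|) (h2 : |k| ≤ (p:ℤ)) :
    ent p a (-k) = ent p a k := by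
  rcases lt_trichotomy k 0 with hk | hk | hk
  · rw [abs_of_neg hk] at h1 h2
    by_contra hne
    have := le_Tof a (Finset.mem_Icc.2 (by omega)) (j := -k)
      (by rw [neg_neg]; exact hne)
    omega
  · subst hk; simp
  · rw [abs_of_pos hk] at h1 h2
    by_contra hne
    have := le_Tof a (Finset.mem_Icc.2 (by omega)) (fun h => hne h.symm)
    omega

lemma ent_prime (a : QStr p) (j : ℤ) :
    ent p (primeQ p a) j =
      if 1 ≤ |j| ∧ |j| ≤ Tof p a then -ent p a j else ent p a j := by
  by_cases h : j ∈ Finset.Icc (-(p : ℤ)) (p : ℤ)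
  · unfold ent primeQ
    rw [dif_pos h, dif_pos h]
    by_cases hc : 1 ≤ |j| ∧ |j| ≤ Tof p a
    · rw [if_pos hc, if_pos hc]
      cases a ⟨j, h⟩ <;> simp
    · rw [if_neg hc, if_neg hc]
  · have habs : (p : ℤ) < |j| := by
      rw [Finset.mem_Icc] at h
      rcases abs_cases j with ⟨h1, _⟩ | ⟨h1, _⟩ <;> omega
    rw [ent_notmem _ h, ent_notmem _ h, if_neg]
    rintro ⟨-, h2⟩
    have := Tof_le a
    omega

lemma ent_prime_in (a : QStr p) {j : ℤ} (h1 : 1 ≤ |j|) (h2 : |j| ≤ Tof p a) :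
    ent p (primeQ p a) j = -ent p a j := by
  rw [ent_prime, if_pos ⟨h1, h2⟩]

lemma ent_prime_out (a : QStr p) {j : ℤ} (h : |j| < 1 ∨ Tof p a < |j|) :
    ent p (primeQ p a) j = ent p a j := by
  rw [ent_prime, if_neg]; rintro ⟨h1, h2⟩; omega

lemma Tof_prime (a : QStr p) : Tof p (primeQ p a) = Tof p a := by
  unfold Tof
  congr 2
  apply Finset.filter_congr
  intro r hr
  rw [Finset.mem_Icc] at hr
  rw [ent_prime, ent_prime, abs_neg]
  by_cases hc : 1 ≤ |r| ∧ |r| ≤ Tof p a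
  · rw [if_pos hc, if_pos hc]
    simp
  · rw [if_neg hc, if_neg hc]

lemma primeQ_primeQ (a : QStr p) : primeQ p (primeQ p a) = a := by
  funext j
  show (if 1 ≤ |j.1| ∧ |j.1| ≤ Tof p (primeQ p a) then !(primeQ p a j) else primeQ p a j) = a j
  rw [Tof_prime]
  unfold primeQ
  by_cases hc : 1 ≤ |j.1| ∧ |j.1| ≤ Tof p a
  · rw [if_pos hc, if_pos hc, Bool.not_not]
  · rw [if_neg hc, if_neg hc]

lemma ent_pm_resolve (a : QStr p) {j k : ℤ} (h : ent p a j ≠ ent p a k) :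
    ent p a k = -ent p a j := by
  rcases ent_one_or_neg_one a j with h1 | h1 <;> rcases ent_one_or_neg_one a k with h2 | h2 <;>
    rw [h1, h2] <;> first | (exfalso; rw [h1, h2] at h; exact h rfl) | norm_num

lemma bket_flip (β x y : ℝ) (hx : x = 1 ∨ x = -1) (hy : y = 1 ∨ y = -1) :
    bket (-x) y β * bket y x (-β) = -(bket x y β * bket y (-x) (-β)) := by
  rcases hx with hx | hx <;> rcases hy with hy | hy <;> subst hx <;> subst hy <;>
    norm_num [bket, Real.sin_neg, Real.cos_neg] <;> ring

end Aux3
noncomputable section Aux4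

variable {p : ℕ} {β γ : ℕ → ℝ}

lemma bket_neg_neg (x y β : ℝ) : bket (-x) (-y) β = bket x y β := by
  have h := bket_smul x y β (ε := (-1:ℝ)) (by norm_num)
  simpa using h

lemma fQ_prime (a : QStr p) (hT : 1 ≤ Tof p a) : fQ p β (primeQ p a) = -fQ p β a := by
  obtain ⟨hmem, hmis⟩ := (Tof_spec a).resolve_left (by omega)
  rw [Finset.mem_Icc] at hmem
  obtain ⟨t, ht⟩ : ∃ t : ℕ, (t : ℤ) = Tof p a :=
    ⟨(Tof p a).toNat, Int.toNat_of_nonneg (Tof_nonneg a)⟩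
  have htmem : t ∈ Finset.Icc 1 p := Finset.mem_Icc.2 ⟨by omega, by omega⟩
  unfold fQ
  rw [← Finset.mul_prod_erase _ _ htmem, ← Finset.mul_prod_erase _ _ htmem]
  have hprod : ∏ r ∈ (Finset.Icc 1 p).erase t,
      (bket (ent p (primeQ p a) (r : ℤ))
          (ent p (primeQ p a) (if r = p then 0 else (r : ℤ) + 1)) (β r) *
        bket (ent p (primeQ p a) (if r = p then 0 else -((r : ℤ) + 1)))
          (ent p (primeQ p a) (-(r : ℤ))) (-(β r))) =
      ∏ r ∈ (Finset.Icc 1 p).erase t,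
      (bket (ent p a (r : ℤ)) (ent p a (if r = p then 0 else (r : ℤ) + 1)) (β r) *
        bket (ent p a (if r = p then 0 else -((r : ℤ) + 1))) (ent p a (-(r : ℤ))) (-(β r))) := by
    refine Finset.prod_congr rfl fun r hr => ?_
    obtain ⟨hrt, hrIcc⟩ := Finset.mem_erase.1 hr
    rw [Finset.mem_Icc] at hrIcc
    obtain ⟨hr1, hrp⟩ := hrIcc
    have habsr : |(r:ℤ)| = (r:ℤ) := abs_of_nonneg (by positivity)
    have habsr1 : |(r:ℤ)+1| = (r:ℤ)+1 := abs_of_nonneg (by positivity)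
    have hrt' : (r:ℤ) ≠ (t:ℤ) := fun h => hrt (by exact_mod_cast h)
    rcases lt_or_gt_of_ne hrt' with hlt | hgt
    · have hrp' : r ≠ p := by omega
      simp only [if_neg hrp']
      rw [ent_prime_in a (by omega) (by omega : |(r:ℤ)| ≤ Tof p a),
        ent_prime_in a (by omega) (by omega : |(r:ℤ)+1| ≤ Tof p a),
        ent_prime_in a (by rw [abs_neg]; omega) (by rw [abs_neg]; omega : |-((r:ℤ)+1)| ≤ Tof p a),
        ent_prime_in a (by rw [abs_neg]; omega) (by rw [abs_neg]; omega : |-(r:ℤ)| ≤ Tof p a),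
        bket_neg_neg, bket_neg_neg]
    · by_cases hrp' : r = p
      · simp only [if_pos hrp']
        rw [ent_prime_out a (Or.inr (by omega : Tof p a < |(r:ℤ)|)),
          ent_prime_out a (Or.inl (by norm_num : |(0:ℤ)| < 1)),
          ent_prime_out a (Or.inr (by rw [abs_neg]; omega : Tof p a < |-(r:ℤ)|))]
      · simp only [if_neg hrp']
        rw [ent_prime_out a (Or.inr (by omega : Tof p a < |(r:ℤ)|)),
          ent_prime_out a (Or.inr (by omega : Tof p a < |(r:ℤ)+1|)),
          ent_prime_out a (Or.inr (by rw [abs_neg]; omega : Tof p a < |-((r:ℤ)+1)|)),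
          ent_prime_out a (Or.inr (by rw [abs_neg]; omega : Tof p a < |-(r:ℤ)|))]
  rw [hprod]
  have habst : |(t:ℤ)| = (t:ℤ) := abs_of_nonneg (by positivity)
  have hmis' : ent p a ((t:ℤ)) ≠ ent p a (-(t:ℤ)) := by rw [ht]; exact hmis
  have hxx : ent p a (-(t:ℤ)) = -ent p a ((t:ℤ)) := ent_pm_resolve a hmis'
  have hmain : (bket (ent p (primeQ p a) (t : ℤ))
        (ent p (primeQ p a) (if t = p then 0 else (t : ℤ) + 1)) (β t) *
      bket (ent p (primeQ p a) (if t = p then 0 else -((t : ℤ) + 1)))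
        (ent p (primeQ p a) (-(t : ℤ))) (-(β t))) =
      -(bket (ent p a (t : ℤ)) (ent p a (if t = p then 0 else (t : ℤ) + 1)) (β t) *
        bket (ent p a (if t = p then 0 else -((t : ℤ) + 1))) (ent p a (-(t : ℤ))) (-(β t))) := by
    have hin : ent p (primeQ p a) ((t:ℤ)) = -ent p a ((t:ℤ)) :=
      ent_prime_in a (by omega) (by omega)
    have hinneg : ent p (primeQ p a) (-(t:ℤ)) = -ent p a (-(t:ℤ)) :=
      ent_prime_in a (by rw [abs_neg]; omega) (by rw [abs_neg]; omega)
    by_cases htp : t = p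
    · simp only [if_pos htp]
      rw [hin, hinneg, ent_prime_out a (Or.inl (by norm_num : |(0:ℤ)| < 1)), hxx, neg_neg]
      exact bket_flip _ _ _ (ent_one_or_neg_one a _) (ent_one_or_neg_one a _)
    · simp only [if_neg htp]
      have htlt : t < p := lt_of_le_of_ne (by omega) htp
      have habst1 : |(t:ℤ)+1| = (t:ℤ)+1 := abs_of_nonneg (by positivity)
      have hyy : ent p a (-((t:ℤ)+1)) = ent p a ((t:ℤ)+1) :=
        ent_match a (by omega) (by omega)
      rw [hin, hinneg,
        ent_prime_out a (Or.inr (by omega : Tof p a < |(t:ℤ)+1|)),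
        ent_prime_out a (Or.inr (by rw [abs_neg]; omega : Tof p a < |-((t:ℤ)+1)|)),
        hyy, hxx, neg_neg]
      exact bket_flip _ _ _ (ent_one_or_neg_one a _) (ent_one_or_neg_one a _)
  rw [hmain]
  ring

end Aux4
noncomputable section Aux5

variable {p : ℕ} {β γ : ℕ → ℝ}

lemma sumrep (m : ℕ) (a : QStr p) :
    (∑ b : QStr p, fQ p β b * Hinf p β γ m b * ((Gdot p γ a b ^ 2 : ℝ) : ℂ)) =
      ∑ j ∈ Finset.Icc (-(p:ℤ)) (p:ℤ), ∑ k ∈ Finset.Icc (-(p:ℤ)) (p:ℤ),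
        GmatH p β γ m j k * (Gam γ j : ℂ) * (Gam γ k : ℂ) *
          (ent p a j : ℂ) * (ent p a k : ℂ) := by
  have expand : ∀ b : QStr p, ((Gdot p γ a b ^ 2 : ℝ) : ℂ) =
      ∑ j ∈ Finset.Icc (-(p:ℤ)) (p:ℤ), ∑ k ∈ Finset.Icc (-(p:ℤ)) (p:ℤ),
        ((Gam γ j : ℂ) * (ent p a j : ℂ) * (ent p b j : ℂ)) *
          ((Gam γ k : ℂ) * (ent p a k : ℂ) * (ent p b k : ℂ)) := by
    intro b
    unfold Gdot
    rw [sq]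
    push_cast
    rw [Finset.sum_mul_sum]
  calc (∑ b : QStr p, fQ p β b * Hinf p β γ m b * ((Gdot p γ a b ^ 2 : ℝ) : ℂ))
      = ∑ b : QStr p, ∑ j ∈ Finset.Icc (-(p:ℤ)) (p:ℤ), ∑ k ∈ Finset.Icc (-(p:ℤ)) (p:ℤ),
          fQ p β b * Hinf p β γ m b *
            (((Gam γ j : ℂ) * (ent p a j : ℂ) * (ent p b j : ℂ)) *
              ((Gam γ k : ℂ) * (ent p a k : ℂ) * (ent p b k : ℂ))) := by
        refine Finset.sum_congr rfl fun b _ => ?_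
        rw [expand b, Finset.mul_sum]
        exact Finset.sum_congr rfl fun j _ => Finset.mul_sum _ _ _
    _ = ∑ j ∈ Finset.Icc (-(p:ℤ)) (p:ℤ), ∑ k ∈ Finset.Icc (-(p:ℤ)) (p:ℤ), ∑ b : QStr p,
          fQ p β b * Hinf p β γ m b *
            (((Gam γ j : ℂ) * (ent p a j : ℂ) * (ent p b j : ℂ)) *
              ((Gam γ k : ℂ) * (ent p a k : ℂ) * (ent p b k : ℂ))) := by
        rw [Finset.sum_comm]
        exact Finset.sum_congr rfl fun j _ => Finset.sum_comm
    _ = ∑ j ∈ Finset.Icc (-(p:ℤ)) (p:ℤ), ∑ k ∈ Finset.Icc (-(p:ℤ)) (p:ℤ),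
        GmatH p β γ m j k * (Gam γ j : ℂ) * (Gam γ k : ℂ) *
          (ent p a j : ℂ) * (ent p a k : ℂ) := by
        refine Finset.sum_congr rfl fun j _ => Finset.sum_congr rfl fun k _ => ?_
        unfold GmatH
        rw [Finset.sum_mul, Finset.sum_mul, Finset.sum_mul, Finset.sum_mul]
        exact Finset.sum_congr rfl fun b _ => by ring

end Aux5
noncomputable section Aux6

variable {p : ℕ} {β γ : ℕ → ℝ}

/-- in-block predicate -/
def inb (p : ℕ) (a : QStr p) (j : ℤ) : Prop := 1 ≤ |j| ∧ |j| ≤ Tof p a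

lemma inb_neg (a : QStr p) (j : ℤ) : inb p a (-j) ↔ inb p a j := by
  unfold inb; rw [abs_neg]

lemma notinb (a : QStr p) {j : ℤ} (h : ¬ inb p a j) : |j| < 1 ∨ Tof p a < |j| := by
  by_cases h1 : 1 ≤ |j|
  · exact Or.inr (lt_of_not_ge fun h2 => h ⟨h1, h2⟩)
  · exact Or.inl (lt_of_not_ge h1)

lemma pairsum_zero (m : ℕ)
    (hG : ∀ j k : ℤ, 1 ≤ |j| → |j| < |k| → |k| ≤ (p:ℤ) →
      GmatH p β γ m j k = GmatH p β γ m j (-k))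
    (a : QStr p) :
    ∑ q ∈ (Finset.Icc (-(p:ℤ)) (p:ℤ)) ×ˢ (Finset.Icc (-(p:ℤ)) (p:ℤ)),
      (GmatH p β γ m q.1 q.2 * (Gam γ q.1 : ℂ) * (Gam γ q.2 : ℂ) *
          (ent p (primeQ p a) q.1 : ℂ) * (ent p (primeQ p a) q.2 : ℂ) -
        GmatH p β γ m q.1 q.2 * (Gam γ q.1 : ℂ) * (Gam γ q.2 : ℂ) *
          (ent p a q.1 : ℂ) * (ent p a q.2 : ℂ)) = 0 := by
  refine Finset.sum_involution
    (fun q _ => ((if inb p a q.1 then q.1 else -q.1), (if inb p a q.2 then q.2 else -q.2)))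
    ?_ ?_ ?_ ?_
  · -- f q + f (g q) = 0
    rintro ⟨j, k⟩ hq
    simp only [Finset.mem_product, Finset.mem_Icc] at hq
    have hjp : |j| ≤ (p:ℤ) := abs_le.2 ⟨hq.1.1, hq.1.2⟩
    have hkp : |k| ≤ (p:ℤ) := abs_le.2 ⟨hq.2.1, hq.2.2⟩
    by_cases cj : inb p a j <;> by_cases ck : inb p a k <;>
      simp only [if_pos, if_neg, cj, ck, if_true, if_false]
    · -- both in block : fixed point, f = 0
      rw [ent_prime_in a cj.1 cj.2, ent_prime_in a ck.1 ck.2]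
      push_cast; ring
    · -- j in, k out
      rcases eq_or_ne k 0 with hk0 | hk0
      · subst hk0
        rw [neg_zero, Gam_zero]
        push_cast; ring
      · have hk1 : 1 ≤ |k| := by rcases abs_pos.2 hk0 with h; omega
        have hkT : Tof p a < |k| := by
          rcases notinb a ck with h | h
          · omega
          · exact h
        have hGk : GmatH p β γ m j (-k) = GmatH p β γ m j k :=
          (hG j k cj.1 (lt_of_le_of_lt cj.2 hkT) hkp).symm
        rw [ent_prime_in a cj.1 cj.2,
          ent_prime_out a (Or.inr hkT),
          ent_prime_out a (Or.inr (by rw [abs_neg]; exact hkT)),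
          ent_match a hkT hkp, hGk, Gam_neg]
        push_cast; ring
    · -- j out, k in
      rcases eq_or_ne j 0 with hj0 | hj0
      · subst hj0
        rw [neg_zero, Gam_zero]
        push_cast; ring
      · have hj1 : 1 ≤ |j| := by rcases abs_pos.2 hj0 with h; omega
        have hjT : Tof p a < |j| := by
          rcases notinb a cj with h | h
          · omega
          · exact h
        have hGj : GmatH p β γ m (-j) k = GmatH p β γ m j k := by
          rw [GmatH_comm, ← hG k j ck.1 (lt_of_le_of_lt ck.2 hjT) hjp, GmatH_comm]
        rw [ent_prime_in a ck.1 ck.2,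
          ent_prime_out a (Or.inr hjT),
          ent_prime_out a (Or.inr (by rw [abs_neg]; exact hjT)),
          ent_match a hjT hjp, hGj, Gam_neg]
        push_cast; ring
    · -- both out
      rw [ent_prime_out a (notinb a cj), ent_prime_out a (notinb a ck),
        ent_prime_out a (by rw [abs_neg]; exact notinb a cj),
        ent_prime_out a (by rw [abs_neg]; exact notinb a ck)]
      push_cast; ring
  · -- f q ≠ 0 → g q ≠ q
    rintro ⟨j, k⟩ hq hf
    intro hgq
    apply hf
    have hj : inb p a j ∨ j = 0 := by
      by_cases cj : inb p a j
      · exact Or.inl cj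
      · right
        have := congrArg Prod.fst hgq
        simp only [if_neg cj] at this
        omega
    have hk : inb p a k ∨ k = 0 := by
      by_cases ck : inb p a k
      · exact Or.inl ck
      · right
        have := congrArg Prod.snd hgq
        simp only [if_neg ck] at this
        omega
    rcases eq_or_ne j 0 with hj0 | hj0
    · subst hj0; rw [Gam_zero]; push_cast; ring
    rcases eq_or_ne k 0 with hk0 | hk0
    · subst hk0; rw [Gam_zero]; push_cast; ring
    have cj := hj.resolve_right hj0
    have ck := hk.resolve_right hk0
    rw [ent_prime_in a cj.1 cj.2, ent_prime_in a ck.1 ck.2]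
    push_cast; ring
  · -- membership
    rintro ⟨j, k⟩ hq
    simp only [Finset.mem_product] at hq ⊢
    constructor
    · by_cases cj : inb p a j
      · simp only [if_pos cj]; exact hq.1
      · simp only [if_neg cj]; exact neg_mem_Icc.2 hq.1
    · by_cases ck : inb p a k
      · simp only [if_pos ck]; exact hq.2
      · simp only [if_neg ck]; exact neg_mem_Icc.2 hq.2
  · -- involution
    rintro ⟨j, k⟩ hq
    have comp : ∀ x : ℤ, (if inb p a (if inb p a x then x else -x)
        then (if inb p a x then x else -x) else -(if inb p a x then x else -x)) = x := by
      intro x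
      by_cases cx : inb p a x
      · simp only [if_pos cx]
      · simp only [if_neg cx, if_neg (fun h => cx ((inb_neg a x).1 h)), neg_neg]
    exact Prod.ext (comp j) (comp k)

lemma Hinf_prime (m : ℕ)
    (hG : ∀ j k : ℤ, 1 ≤ |j| → |j| < |k| → |k| ≤ (p:ℤ) →
      GmatH p β γ m j k = GmatH p β γ m j (-k))
    (a : QStr p) : Hinf p β γ (m+1) (primeQ p a) = Hinf p β γ (m+1) a := by
  show Complex.exp _ = Complex.exp _
  congr 2
  rw [sumrep, sumrep, ← sub_eq_zero, ← Finset.sum_product', ← Finset.sum_product',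
    ← Finset.sum_sub_distrib]
  exact pairsum_zero m hG a

end Aux6
noncomputable section Aux7

variable {p : ℕ} {β γ : ℕ → ℝ}

lemma Gsymm_abs (m : ℕ)
    (h1 : ∀ r s : ℤ, 1 ≤ r → r < s → s ≤ (p:ℤ) →
      GmatH p β γ m r s = GmatH p β γ m r (-s)) :
    ∀ j k : ℤ, 1 ≤ |j| → |j| < |k| → |k| ≤ (p:ℤ) →
      GmatH p β γ m j k = GmatH p β γ m j (-k) := by
  have hpos : ∀ j k : ℤ, 1 ≤ j → j < |k| → |k| ≤ (p:ℤ) →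
      GmatH p β γ m j k = GmatH p β γ m j (-k) := by
    intro j k hj hk hkp
    rcases lt_trichotomy k 0 with hk0 | hk0 | hk0
    · rw [abs_of_neg hk0] at hk hkp
      have := h1 j (-k) hj hk hkp
      rw [neg_neg] at this
      exact this.symm
    · subst hk0; simp at hk; omega
    · rw [abs_of_pos hk0] at hk hkp
      exact h1 j k hj hk hkp
  intro j k hj hjk hkp
  rcases lt_trichotomy j 0 with hj0 | hj0 | hj0
  · have hjj : 1 ≤ -j := by rw [abs_of_neg hj0] at hj; omega
    have e1 : GmatH p β γ m j k = (starRingEnd ℂ) (GmatH p β γ m (-j) (-k)) := by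
      have := GmatH_rev (p := p) (β := β) (γ := γ) m (-j) (-k)
      rwa [neg_neg, neg_neg] at this
    have e2 : GmatH p β γ m j (-k) = (starRingEnd ℂ) (GmatH p β γ m (-j) k) := by
      have := GmatH_rev (p := p) (β := β) (γ := γ) m (-j) k
      rwa [neg_neg] at this
    rw [e1, e2]
    congr 1
    have := hpos (-j) (-k) hjj
      (by rw [abs_neg]; rwa [abs_of_neg hj0] at hjk) (by rwa [abs_neg])
    rwa [neg_neg] at this
  · subst hj0; simp at hj
  · exact hpos j k (by rwa [abs_of_pos hj0] at hj) (by rwa [abs_of_pos hj0] at hjk) hkp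

lemma Geq1 (m : ℕ)
    (hHp : ∀ a : QStr p, Hinf p β γ m (primeQ p a) = Hinf p β γ m a)
    (r s : ℤ) (hr : 1 ≤ r) (hrs : r < s) (hs : s ≤ (p:ℤ)) :
    GmatH p β γ m r s = GmatH p β γ m r (-s) := by
  rw [← sub_eq_zero]
  unfold GmatH
  rw [← Finset.sum_sub_distrib]
  refine Finset.sum_involution (fun a _ => primeQ p a) ?_ ?_ (fun a _ => Finset.mem_univ _)
    (fun a _ => primeQ_primeQ a)
  · intro a _
    by_cases hss : ent p a s = ent p a (-s)
    · have h2 : ent p (primeQ p a) s = ent p (primeQ p a) (-s) := by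
        rw [ent_prime, ent_prime, abs_neg, hss]
      rw [hss, h2]; ring
    · have hsT : s ≤ Tof p a :=
        le_Tof a (Finset.mem_Icc.2 ⟨by omega, hs⟩) hss
    
      have h1T : 1 ≤ Tof p a := by omega
      rw [fQ_prime a h1T, hHp a,
        ent_prime_in a (by rw [abs_of_pos (by omega : (0:ℤ) < r)]; omega)
          (by rw [abs_of_pos (by omega : (0:ℤ) < r)]; omega),
        ent_prime_in a (by rw [abs_of_pos (by omega : (0:ℤ) < s)]; omega)
          (by rw [abs_of_pos (by omega : (0:ℤ) < s)]; omega),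
        ent_prime_in a (by rw [abs_neg, abs_of_pos (by omega : (0:ℤ) < s)]; omega)
          (by rw [abs_neg, abs_of_pos (by omega : (0:ℤ) < s)]; omega)]
      push_cast; ring
  · intro a _ hfa heq
    have heq' : primeQ p a = a := heq
    apply hfa
    by_cases hss : ent p a s = ent p a (-s)
    · rw [hss]; ring
    · exfalso
      have hsT : s ≤ Tof p a :=
        le_Tof a (Finset.mem_Icc.2 ⟨by omega, hs⟩) hss
      have h2 : ent p (primeQ p a) s = -ent p a s :=
        ent_prime_in a (by rw [abs_of_pos (by omega : (0:ℤ) < s)]; omega)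
          (by rw [abs_of_pos (by omega : (0:ℤ) < s)]; omega)
      rw [heq'] at h2
      have := ent_ne_zero a s
      have : ent p a s = 0 := by linarith
      exact ent_ne_zero a s this

lemma Gstep (m : ℕ)
    (hHp : ∀ a : QStr p, Hinf p β γ m (primeQ p a) = Hinf p β γ m a)
    (r s : ℤ) (hr : 1 ≤ r) (hrs : r < s) (hs : s ≤ (p:ℤ)) :
    GmatH p β γ m r s = GmatH p β γ m r (-s) ∧
    GmatH p β γ m (-r) (-s) = (starRingEnd ℂ) (GmatH p β γ m r s) ∧
    GmatH p β γ m (-r) s = (starRingEnd ℂ) (GmatH p β γ m r s) := by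
  have e1 := Geq1 m hHp r s hr hrs hs
  refine ⟨e1, GmatH_rev m r s, ?_⟩
  have e4 : GmatH p β γ m (-r) s = (starRingEnd ℂ) (GmatH p β γ m r (-s)) := by
    have := GmatH_rev (p := p) (β := β) (γ := γ) m r (-s)
    rwa [neg_neg] at this
  rw [e4, ← e1]

lemma Gmain : ∀ m : ℕ, ∀ r s : ℤ, 1 ≤ r → r < s → s ≤ (p:ℤ) →
    GmatH p β γ m r s = GmatH p β γ m r (-s) ∧
    GmatH p β γ m (-r) (-s) = (starRingEnd ℂ) (GmatH p β γ m r s) ∧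
    GmatH p β γ m (-r) s = (starRingEnd ℂ) (GmatH p β γ m r s) := by
  intro m
  induction m with
  | zero => exact Gstep 0 (fun a => rfl)
  | succ m ih =>
    exact Gstep (m+1) (Hinf_prime m (Gsymm_abs m (fun r s hr hrs hs => (ih r s hr hrs hs).1)))

end Aux7

/-- for 1 ≤ r < s ≤ p,
G^{(m)}_{r,s} = G^{(m)}_{r,-s}, G^{(m)}_{-r,-s} = conj(G^{(m)}_{r,s}),
and G^{(m)}_{-r,s} = conj(G^{(m)}_{r,s}). -/
theorem stmt_16 (p : ℕ) (hp : 1 ≤ p) (β γ : ℕ → ℝ) (m : ℕ) (hm : m ≤ p)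
    (r s : ℤ) (hr : 1 ≤ r) (hrs : r < s) (hs : s ≤ (p : ℤ)) :
    GmatH p β γ m r s = GmatH p β γ m r (-s) ∧
    GmatH p β γ m (-r) (-s) = (starRingEnd ℂ) (GmatH p β γ m r s) ∧
    GmatH p β γ m (-r) s = (starRingEnd ℂ) (GmatH p β γ m r s) := by exact Gmain m r s hr hrs hs
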